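/- Let n ≥ 1, λ ∈ [0,1], and for each i = 1, …, n let d_i ≥ 0, c_i ∈ ℝ, h_i > 0, and let D_i be the trapezoidal fuzzy variable (a_i − α_i, a_i, b_i, b_i + β_i) with α_i > 0, β_i > 0, 0 < a_i − α_i, and a_i ≤ b_i. Set e_i = ∫_0^∞ m_λ(D_i ≤ 1/r) dr and f(x) = Σ_{i=1}^n (d_i·x_i − c_i − (h_i·x_i²/2)·e_i). Then f(y) ≤ f(x*) for every y ∈ ℝⁿ with y_i ≥ 0, where x_i* = d_i / ( h_i·[ (λ/α_i)·ln(a_i/(a_i − α_i)) + ((1 − λ)/β_i)·ln((b_i + β_i)/b_i) ] ). -/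

import Mathlib

/-!
The trapezoidal membership function is `min (L x) (1 - R x)` for the two clamped linear ramps
`L` (from `0` at `a - α` to `1` at `a`) and `R` (from `0` at `b` to `1` at `b + β`). Since `L` and
`R` are monotone, `Pos (D ≤ t) = L t` and `Nec (D ≤ t) = R t`, so `m_λ(D ≤ 1/r)` is
`λ L(1/r) + (1 - λ) R(1/r)`. A ramp rising from `p` to `p + w`, evaluated at `1/r`, has integral
`log ((p + w) / p) / w` over `r > 0`; hence `e_i` is exactly the positive bracket in `x_i*`, and each
summand `d y - c - h e y² / 2` of the profit is a concave parabola with vertex `d / (h e)`.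
-/

open MeasureTheory Set

/-- Possibility measure of an event `A` built from membership function `μ`
(with the convention `sSup ∅ = 0`, which holds for `Real.sSup`). -/
noncomputable def Pos (μ : ℝ → ℝ) (A : Set ℝ) : ℝ := sSup (μ '' A)

/-- Necessity measure associated with `μ`. -/
noncomputable def Nec (μ : ℝ → ℝ) (A : Set ℝ) : ℝ := 1 - Pos μ Aᶜ

/-- The parametric measure `m_λ(A) = λ·Pos(A) + (1−λ)·Nec(A)`. -/
noncomputable def mMeas (l : ℝ) (μ : ℝ → ℝ) (A : Set ℝ) : ℝ :=
  l * Pos μ A + (1 - l) * Nec μ A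

/-- The `m_λ`-expected value of the fuzzy variable with membership function `μ`:
`E_λ(ξ) = ∫_{−∞}^0 (m_λ([r,∞)) − 1) dr + ∫_0^∞ m_λ([r,∞)) dr`. -/
noncomputable def Eexp (l : ℝ) (μ : ℝ → ℝ) : ℝ :=
  (∫ r in Set.Iic (0:ℝ), (mMeas l μ (Set.Ici r) - 1)) +
  (∫ r in Set.Ioi (0:ℝ), mMeas l μ (Set.Ici r))

/-- Membership function of the trapezoidal fuzzy variable `(r1,r2,r3,r4)`. -/
noncomputable def trapMF (r1 r2 r3 r4 : ℝ) : ℝ → ℝ := fun x =>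
  if r1 ≤ x ∧ x ≤ r2 then (x - r1) / (r2 - r1)
  else if r2 ≤ x ∧ x ≤ r3 then 1
  else if r3 ≤ x ∧ x ≤ r4 then (r4 - x) / (r4 - r3)
  else 0

/-- Membership function of the triangular fuzzy variable `(r1,r2,r4)`. -/
noncomputable def triMF (r1 r2 r4 : ℝ) : ℝ → ℝ := fun x =>
  if r1 ≤ x ∧ x ≤ r2 then (x - r1) / (r2 - r1)
  else if r2 ≤ x ∧ x ≤ r4 then (r4 - x) / (r4 - r2)
  else 0

/-- Membership function of the trapezoidal fuzzy variable `(a−α, a, b, b+β)`. -/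
noncomputable def trapMF2 (a b α β : ℝ) : ℝ → ℝ := fun x =>
  if a - α ≤ x ∧ x ≤ a then 1 - (a - x) / α
  else if a ≤ x ∧ x ≤ b then 1
  else if b ≤ x ∧ x ≤ b + β then 1 - (x - b) / β
  else 0

/-- Membership function of the triangular fuzzy variable `(a−α, a, a+β)`. -/
noncomputable def triMF2 (a α β : ℝ) : ℝ → ℝ := fun x =>
  if a - α ≤ x ∧ x ≤ a then 1 - (a - x) / α
  else if a ≤ x ∧ x ≤ a + β then 1 - (x - a) / β
  else 0

noncomputable def ramp (p w t : ℝ) : ℝ := max 0 (min 1 ((t - p) / w))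

section ramp
variable {p w t : ℝ}

theorem ramp_nonneg : 0 ≤ ramp p w t := le_max_left _ _

theorem ramp_le_one : ramp p w t ≤ 1 := max_le zero_le_one (min_le_left _ _)

theorem ramp_of_le (hw : 0 ≤ w) (ht : t ≤ p) : ramp p w t = 0 :=
  max_eq_left (min_le_of_right_le (div_nonpos_of_nonpos_of_nonneg (by linarith) hw))

theorem ramp_of_ge (hw : 0 < w) (ht : p + w ≤ t) : ramp p w t = 1 := by
  have : 1 ≤ (t - p) / w := by rw [le_div_iff₀ hw]; linarith
  simp [ramp, min_eq_left this]

theorem ramp_of_mem (hw : 0 < w) (h₁ : p ≤ t) (h₂ : t ≤ p + w) : ramp p w t = (t - p) / w := by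
  have : (t - p) / w ≤ 1 := by rw [div_le_one hw]; linarith
  simp [ramp, min_eq_right this, div_nonneg (sub_nonneg.2 h₁) hw.le]

theorem ramp_monotone (hw : 0 ≤ w) : Monotone (ramp p w) := fun _ _ h =>
  max_le_max_left _ (min_le_min_left _ (div_le_div_of_nonneg_right (sub_le_sub_right h _) hw))

theorem ramp_continuous : Continuous (ramp p w) := by
  unfold ramp; fun_prop

end ramp

section trapezoid
variable {a b α β : ℝ}

theorem trapMF2_eq_min (hα : 0 < α) (hβ : 0 < β) (hab : a ≤ b) (x : ℝ) :
    trapMF2 a b α β x = min (ramp (a - α) α x) (1 - ramp b β x) := by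
  unfold trapMF2
  split_ifs with hl hm hr
  · rw [ramp_of_mem hα hl.1 (by linarith), ramp_of_le hβ.le (hl.2.trans hab), sub_zero,
      min_eq_left (by rw [div_le_one hα]; linarith)]
    field_simp; ring
  · rw [ramp_of_ge hα (by linarith), ramp_of_le hβ.le hm.2]; norm_num
  · rw [ramp_of_ge hα (by linarith [hab, not_and_or.mp hm]), ramp_of_mem hβ hr.1 hr.2,
      min_eq_right (by linarith [div_nonneg (sub_nonneg.2 hr.1) hβ.le])]
  · push Not at hl hm hr
    rcases lt_or_ge x (a - α) with hx | hx
    · rw [ramp_of_le hα.le hx.le, ramp_of_le hβ.le (by linarith)]; norm_num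
    · have hbx : b < x := hm (by linarith [hl hx])
      rw [ramp_of_ge hα (by linarith [hl hx]), ramp_of_ge hβ (hr hbx.le).le]; norm_num

theorem pos_trapMF2_Iic (hα : 0 < α) (hβ : 0 < β) (hab : a ≤ b) (t : ℝ) :
    Pos (trapMF2 a b α β) (Iic t) = ramp (a - α) α t := by
  refine IsGreatest.csSup_eq ⟨⟨min t a, min_le_left t a, ?_⟩, ?_⟩
  · rw [trapMF2_eq_min hα hβ hab, ramp_of_le hβ.le ((min_le_right t a).trans hab), sub_zero,
      min_eq_left ramp_le_one]
    rcases le_total t a with h | h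
    · rw [min_eq_left h]
    · rw [min_eq_right h, ramp_of_ge hα (by linarith), ramp_of_ge hα (by linarith)]
  · rintro _ ⟨x, hx, rfl⟩
    rw [trapMF2_eq_min hα hβ hab]
    exact (min_le_left _ _).trans (ramp_monotone hα.le hx)

theorem nec_trapMF2_Iic (hα : 0 < α) (hβ : 0 < β) (hab : a ≤ b) (t : ℝ) :
    Nec (trapMF2 a b α β) (Iic t) = ramp b β t := by
  suffices sSup (trapMF2 a b α β '' Ioi t) = 1 - ramp b β t by
    rw [Nec, Pos, compl_Iic, this]; ring
  rcases lt_or_ge t a with h | h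
  · rw [ramp_of_le hβ.le (h.le.trans hab), sub_zero]
    refine IsGreatest.csSup_eq ⟨⟨a, h, ?_⟩, ?_⟩
    · rw [trapMF2_eq_min hα hβ hab, ramp_of_ge hα (by linarith), ramp_of_le hβ.le hab]; norm_num
    · rintro _ ⟨x, -, rfl⟩
      rw [trapMF2_eq_min hα hβ hab]
      exact (min_le_left _ _).trans ramp_le_one
  · have hEq : EqOn (trapMF2 a b α β) (fun x => 1 - ramp b β x) (Ioi t) := fun x hx => by
      rw [trapMF2_eq_min hα hβ hab, ramp_of_ge hα (by linarith [mem_Ioi.1 hx]),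
        min_eq_right (by linarith [ramp_nonneg (p := b) (w := β) (t := x)])]
    rw [hEq.image_eq]
    calc sSup ((fun x => 1 - ramp b β x) '' Ioi t)
        = 1 - ramp b β (sInf (Ioi t)) :=
          (Antitone.map_csInf_of_continuousAt (continuous_const.sub ramp_continuous).continuousAt
            (fun _ _ hxy => sub_le_sub_left (ramp_monotone hβ.le hxy) 1) nonempty_Ioi
            bddBelow_Ioi).symm
      _ = 1 - ramp b β t := by rw [csInf_Ioi]

end trapezoid

section rampIntegral
variable {p w : ℝ}

theorem integral_one_div_sub_div {q₁ q₂ : ℝ} (hq₁ : 0 < q₁) (hq : q₁ ≤ q₂) :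
    ∫ r in Ioc q₁ q₂, (1 / r - p) / w = (Real.log (q₂ / q₁) - p * (q₂ - q₁)) / w := by
  have hinv : IntervalIntegrable (fun r : ℝ => 1 / r) volume q₁ q₂ :=
    intervalIntegral.intervalIntegrable_one_div
      (fun x hx => ((uIcc_of_le hq ▸ hx).1.trans_lt' hq₁).ne') continuousOn_id
  rw [← intervalIntegral.integral_of_le hq, intervalIntegral.integral_div,
    intervalIntegral.integral_sub hinv intervalIntegrable_const,
    integral_one_div_of_pos hq₁ (hq₁.trans_le hq), intervalIntegral.integral_const, smul_eq_mul,
    mul_comm]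

theorem ramp_one_div_eq_zero (hp : 0 < p) (hw : 0 ≤ w) {r : ℝ} (hr : 1 / p < r) :
    ramp p w (1 / r) = 0 :=
  ramp_of_le hw ((one_div_lt hp ((one_div_pos.2 hp).trans hr)).1 hr).le

theorem integrableOn_ramp_one_div (hp : 0 < p) (hw : 0 ≤ w) :
    IntegrableOn (fun r => ramp p w (1 / r)) (Ioi 0) := by
  refine IntegrableOn.of_forall_sdiff_eq_zero (s := Ioc 0 (1 / p)) ?_ measurableSet_Ioi
    fun r hr => ramp_one_div_eq_zero hp hw (not_le.1 fun h => hr.2 ⟨hr.1, h⟩)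
  refine Measure.integrableOn_of_bounded (M := 1) measure_Ioc_lt_top.ne
    (ramp_continuous.measurable.comp (measurable_const.div measurable_id)).aestronglyMeasurable
    (Filter.Eventually.of_forall fun r => ?_)
  rw [Real.norm_of_nonneg ramp_nonneg]
  exact ramp_le_one

theorem integral_ramp_one_div (hp : 0 < p) (hw : 0 < w) :
    ∫ r in Ioi 0, ramp p w (1 / r) = Real.log ((p + w) / p) / w := by
  have hpw : 0 < p + w := by linarith
  set q₁ := 1 / (p + w)
  set q₂ := 1 / p
  have hq₁ : 0 < q₁ := one_div_pos.2 hpw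
  have hq : q₁ ≤ q₂ := one_div_le_one_div_of_le hp (by linarith)
  have hint := integrableOn_ramp_one_div hp hw.le
  have hone : EqOn (fun r => ramp p w (1 / r)) 1 (Ioc 0 q₁) := fun r hr =>
    ramp_of_ge hw ((le_one_div hr.1 hpw).1 hr.2)
  have hmid : EqOn (fun r => ramp p w (1 / r)) (fun r => (1 / r - p) / w) (Ioc q₁ q₂) :=
    fun r hr => ramp_of_mem hw ((le_one_div hp (hq₁.trans hr.1)).2 hr.2)
      ((one_div_lt hpw (hq₁.trans hr.1)).1 hr.1).le
  calc ∫ r in Ioi 0, ramp p w (1 / r)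
      = ∫ r in Ioc 0 q₂, ramp p w (1 / r) :=
        setIntegral_eq_of_subset_of_forall_sdiff_eq_zero measurableSet_Ioi Ioc_subset_Ioi_self
          fun r hr => ramp_one_div_eq_zero hp hw.le (not_le.1 fun h => hr.2 ⟨hr.1, h⟩)
    _ = (∫ r in Ioc 0 q₁, ramp p w (1 / r)) + ∫ r in Ioc q₁ q₂, ramp p w (1 / r) := by
        rw [← setIntegral_union (Ioc_disjoint_Ioc_of_le le_rfl) measurableSet_Ioc
          (hint.mono_set Ioc_subset_Ioi_self) (hint.mono_set fun r hr => hq₁.trans hr.1),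
          Ioc_union_Ioc_eq_Ioc hq₁.le hq]
    _ = q₁ + (Real.log (q₂ / q₁) - p * (q₂ - q₁)) / w := by
        rw [setIntegral_congr_fun measurableSet_Ioc hone,
          setIntegral_congr_fun measurableSet_Ioc hmid, integral_one_div_sub_div hq₁ hq]
        simp [hq₁.le]
    _ = Real.log ((p + w) / p) / w := by
        have hq₂q₁ : q₂ / q₁ = (p + w) / p := by simp only [q₁, q₂]; field_simp
        rw [hq₂q₁]
        simp only [q₁, q₂]
        field_simp
        ring

end rampIntegral

theorem integral_mMeas_trapMF2_Iic_one_div {l a b α β : ℝ} (hα : 0 < α) (hβ : 0 < β)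
    (hpos : 0 < a - α) (hab : a ≤ b) :
    ∫ r in Ioi (0:ℝ), mMeas l (trapMF2 a b α β) (Iic (1 / r)) =
      l / α * Real.log (a / (a - α)) + (1 - l) / β * Real.log ((b + β) / b) := by
  have hb : 0 < b := by linarith
  simp only [mMeas, pos_trapMF2_Iic hα hβ hab, nec_trapMF2_Iic hα hβ hab]
  rw [integral_add ((integrableOn_ramp_one_div hpos hα.le).const_mul l)
      ((integrableOn_ramp_one_div hb hβ.le).const_mul (1 - l)),
    integral_const_mul, integral_const_mul, integral_ramp_one_div hpos hα,
    integral_ramp_one_div hb hβ, sub_add_cancel]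
  ring

theorem quadratic_le_at_vertex {d c h k : ℝ} (hhk : 0 < h * k) (y : ℝ) :
    d * y - c - h * y ^ 2 / 2 * k ≤ d * (d / (h * k)) - c - h * (d / (h * k)) ^ 2 / 2 * k := by
  set x := d / (h * k)
  have hd : d = h * k * x := (mul_div_cancel₀ d hhk.ne').symm
  rw [hd]
  nlinarith [mul_nonneg hhk.le (sq_nonneg (y - x))]

theorem stmt_11_general (n : ℕ) (l : ℝ) (hl : l ∈ Set.Icc (0:ℝ) 1)
    (d c hh a b α β e xs : Fin n → ℝ)
    (hhpos : ∀ i, 0 < hh i)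
    (hα : ∀ i, 0 < α i) (hβ : ∀ i, 0 < β i)
    (hpos : ∀ i, 0 < a i - α i) (hab : ∀ i, a i ≤ b i)
    (he : ∀ i, e i =
      ∫ r in Set.Ioi (0:ℝ), mMeas l (trapMF2 (a i) (b i) (α i) (β i)) (Set.Iic (1 / r)))
    (hxs : ∀ i, xs i = d i / (hh i *
      (l / α i * Real.log (a i / (a i - α i)) +
        (1 - l) / β i * Real.log ((b i + β i) / b i)))) :
    ∀ y : Fin n → ℝ, (∀ i, 0 ≤ y i) →
      (∑ i, (d i * y i - c i - hh i * y i ^ 2 / 2 * e i)) ≤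
      (∑ i, (d i * xs i - c i - hh i * xs i ^ 2 / 2 * e i)) := by
  intro y _
  refine Finset.sum_le_sum fun i _ => ?_
  have hb : 0 < b i := by linarith [hpos i, hab i, hα i]
  have hLa : 0 < Real.log (a i / (a i - α i)) :=
    Real.log_pos ((one_lt_div (hpos i)).2 (by linarith [hα i]))
  have hLb : 0 < Real.log ((b i + β i) / b i) :=
    Real.log_pos ((one_lt_div hb).2 (by linarith [hβ i]))
  have he_pos : 0 < l / α i * Real.log (a i / (a i - α i)) +
      (1 - l) / β i * Real.log ((b i + β i) / b i) := by
    have := convex_Ioi (0:ℝ) (div_pos hLa (hα i)) (div_pos hLb (hβ i)) hl.1 (sub_nonneg.2 hl.2)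
      (add_sub_cancel l 1)
    rw [mem_Ioi, smul_eq_mul, smul_eq_mul] at this
    exact this.trans_eq (by ring)
  rw [he i, integral_mMeas_trapMF2_Iic_one_div (hα i) (hβ i) (hpos i) (hab i), hxs i]
  exact quadratic_le_at_vertex (mul_pos (hhpos i) he_pos) (y i)

theorem stmt_11 (n : ℕ) (hn : 1 ≤ n) (l : ℝ) (hl : l ∈ Set.Icc (0:ℝ) 1)
    (d c hh a b α β e xs : Fin n → ℝ)
    (hd : ∀ i, 0 ≤ d i) (hhpos : ∀ i, 0 < hh i)
    (hα : ∀ i, 0 < α i) (hβ : ∀ i, 0 < β i)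
    (hpos : ∀ i, 0 < a i - α i) (hab : ∀ i, a i ≤ b i)
    (he : ∀ i, e i =
      ∫ r in Set.Ioi (0:ℝ), mMeas l (trapMF2 (a i) (b i) (α i) (β i)) (Set.Iic (1 / r)))
    (hxs : ∀ i, xs i = d i / (hh i *
      (l / α i * Real.log (a i / (a i - α i)) +
        (1 - l) / β i * Real.log ((b i + β i) / b i)))) :
    ∀ y : Fin n → ℝ, (∀ i, 0 ≤ y i) →
      (∑ i, (d i * y i - c i - hh i * y i ^ 2 / 2 * e i)) ≤
      (∑ i, (d i * xs i - c i - hh i * xs i ^ 2 / 2 * e i)) :=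
  stmt_11_general n l hl d c hh a b α β e xs hhpos hα hβ hpos hab he hxs
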